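/- Let p be an odd prime and let α₀ ∈ ℚ_p be a quadratic irrational with conjugate ᾱ₀. Let (α_n), (b_n) be the sequences produced by Browkin's first algorithm applied to α₀, and assume the expansion is periodic. Then the expansion is purely periodic if and only if ‖α₀‖_p > 1 and ‖ᾱ₀‖_p < 1. -/

import Mathlib

/-!
The conjugates `βₙ` of the complete quotients `αₙ` obey the same recursion
`βₙ₊₁ = (βₙ - bₙ)⁻¹`, and `αₙ` determines `βₙ`. Since `‖αₙ - bₙ‖ < 1` forces
`‖αₙ - bₙ‖ ≤ p⁻¹`, the map `z ↦ (z - bₙ)⁻¹` expands distances by a factor `≥ p` along the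
orbit, so an orbit is determined by its digits as long as each digit stays within distance `< 1`
of its complete quotient; in particular digits periodic from index `m` give `αₘ = αₘ₊ₖ`.

If the expansion is purely periodic, `‖α₀‖ = ‖αₖ‖ > 1`, and `‖β₀‖ ≥ 1` would propagate (by
periodicity) to `‖βₙ‖ > 1` for all `n`, making the `bₙ` the floors of the `βₙ` as well and
forcing `α₀ = β₀`. Conversely, if `‖α₀‖ > 1 > ‖β₀‖`, then all `‖βₙ‖ < 1`, so
`bₙ = βₙ - βₙ₊₁⁻¹` is the floor of `-βₙ₊₁⁻¹`, and `αₘ₊₁ = αₘ₊₁₊ₖ` yields `bₘ = bₘ₊ₖ`: the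
period extends backwards one index at a time.
-/

/-- A rational number `a` is a `p`-adic fraction if `a * p^m` is an integer
for some natural number `m`, i.e. `a ∈ ℤ[1/p]`. -/
def IsPadicFrac (p : ℕ) (a : ℚ) : Prop := ∃ (m : ℕ) (z : ℤ), a * (p : ℚ) ^ m = (z : ℚ)

/-- `b` is Browkin's integral floor `s α`: the unique `p`-adic fraction with
`|b| < p/2` and `‖α - b‖_p < 1`. -/
def IsIntFloor (p : ℕ) [Fact p.Prime] (α : ℚ_[p]) (b : ℚ) : Prop :=
  IsPadicFrac p b ∧ |b| < (p : ℚ) / 2 ∧ ‖α - (b : ℚ_[p])‖ < 1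

/-- Browkin's first algorithm: `b n = s (α n)` for all `n`, and
`α (n + 1) = (α n - b n)⁻¹`. -/
def Alg1 (p : ℕ) [Fact p.Prime] (α : ℕ → ℚ_[p]) (b : ℕ → ℚ) : Prop :=
  (∀ n, IsIntFloor p (α n) (b n)) ∧
  ∀ n, α (n + 1) = (α n - (b n : ℚ_[p]))⁻¹

open Set

section Ultrametric

variable {K : Type*} [NormedField K] [IsUltrametricDist K]

lemma norm_sub_lt_of_norm_lt_of_norm_lt {a b : K} {ε : ℝ} (ha : ‖a‖ < ε) (hb : ‖b‖ < ε) :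
    ‖a - b‖ < ε := by
  rw [sub_eq_add_neg]
  exact (IsUltrametricDist.norm_add_le_max a (-b)).trans_lt (max_lt ha (by rwa [norm_neg]))

lemma norm_inv_sub_lt_one {y c : K} (hc : 1 < ‖c‖) (hy : ‖y‖ ≤ 1) : ‖(y - c)⁻¹‖ < 1 := by
  have hyc : ‖y - c‖ = ‖c‖ := by
    rw [sub_eq_add_neg, IsUltrametricDist.norm_add_eq_max_of_norm_ne_norm, norm_neg]
    · exact max_eq_right (by linarith)
    · rw [norm_neg]; linarith
  rw [norm_inv, hyc]
  exact inv_lt_one_of_one_lt₀ hc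

lemma one_lt_norm_of_norm_sub_lt_one {a b : K} (hab : ‖a - b‖ < 1) (ha : 1 < ‖a‖) : 1 < ‖b‖ := by
  by_contra! hb
  have := IsUltrametricDist.norm_add_le_max (a - b) b
  rw [sub_add_cancel] at this
  linarith [this.trans (max_le hab.le hb)]

end Ultrametric

lemma one_lt_norm_inv_iff {K : Type*} [NormedDivisionRing K] {z : K} :
    1 < ‖z⁻¹‖ ↔ ‖z‖ ∈ Ioo 0 1 := by
  rw [norm_inv, one_lt_inv_iff₀]
  rfl

section QuadraticConjugate

variable {K : Type*} [Field K]

/-- `x ∉ ℚ`, and `y` is its conjugate: both are roots of some `X² - uX + v` with `u v : ℚ`. -/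
def IsQuadConj (x y : K) : Prop :=
  (∀ q : ℚ, x ≠ q) ∧ ∃ u v : ℚ, x + y = u ∧ x * y = v

lemma isQuadConj_sub_of_sq_eq {x : K} (hx : ∀ q : ℚ, x ≠ q) {r s : ℚ}
    (h : x ^ 2 = r * x + s) : IsQuadConj x (r - x) :=
  ⟨hx, r, -s, by ring, by push_cast; linear_combination -h⟩

namespace IsQuadConj

variable [CharZero K] {x y y' : K}

lemma right_ne_ratCast (h : IsQuadConj x y) (q : ℚ) : y ≠ q := by
  obtain ⟨hx, u, -, hu, -⟩ := h
  rintro rfl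
  exact hx (u - q) (by push_cast; rw [← hu]; ring)

lemma left_ne_right (h : IsQuadConj x y) : x ≠ y := by
  obtain ⟨hx, u, -, hu, -⟩ := h
  rintro rfl
  exact hx (u / 2) (by push_cast; rw [← hu]; ring)

lemma right_unique (h : IsQuadConj x y) (h' : IsQuadConj x y') : y = y' := by
  obtain ⟨hx, u, v, hu, hv⟩ := h
  obtain ⟨-, u', v', hu', hv'⟩ := h'
  obtain rfl : u = u' := by
    by_contra hne
    apply hx ((v - v') / (u - u'))
    rw [Rat.cast_div, eq_div_iff (by exact_mod_cast sub_ne_zero.mpr hne)]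
    push_cast
    linear_combination x * hu' - x * hu + hv - hv'
  linear_combination hu - hu'

lemma inv_sub (h : IsQuadConj x y) (c : ℚ) : IsQuadConj (x - c)⁻¹ (y - c)⁻¹ := by
  have hxc : x - c ≠ 0 := sub_ne_zero.mpr (h.1 c)
  have hyc : y - c ≠ 0 := sub_ne_zero.mpr (h.right_ne_ratCast c)
  obtain ⟨hx, u, v, hu, hv⟩ := h
  have hN : (x - c) * (y - c) = ((v - c * u + c ^ 2 : ℚ) : K) := by
    push_cast
    rw [← hu, ← hv]
    ring
  refine ⟨fun q hq => hx (c + q⁻¹) ?_, (u - 2 * c) * (v - c * u + c ^ 2)⁻¹,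
    (v - c * u + c ^ 2)⁻¹, ?_, ?_⟩
  · push_cast
    rw [← hq, inv_inv]
    ring
  · rw [inv_add_inv hxc hyc, hN, div_eq_mul_inv, Rat.cast_mul, Rat.cast_inv]
    push_cast
    rw [← hu]
    ring
  · rw [← mul_inv, hN, Rat.cast_inv]

end IsQuadConj

end QuadraticConjugate

section Orbit

variable {K : Type*} [DivisionRing K]

def IsCFOrbit (c : ℕ → ℚ) (x : ℕ → K) : Prop :=
  ∀ n, x (n + 1) = (x n - c n)⁻¹

def cfOrbit (c : ℕ → ℚ) (x₀ : K) : ℕ → K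
  | 0 => x₀
  | n + 1 => (cfOrbit c x₀ n - c n)⁻¹

lemma isCFOrbit_cfOrbit (c : ℕ → ℚ) (x₀ : K) : IsCFOrbit c (cfOrbit c x₀) :=
  fun _ => rfl

namespace IsCFOrbit

variable {c : ℕ → ℚ} {x : ℕ → K}

lemma comp_add (hx : IsCFOrbit c x) (m : ℕ) :
    IsCFOrbit (fun n => c (n + m)) (fun n => x (n + m)) := fun n => by
  simp only [Nat.add_right_comm n 1 m]
  exact hx (n + m)

lemma digit_eq (hx : IsCFOrbit c x) (n : ℕ) : (c n : K) = x n - (x (n + 1))⁻¹ := by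
  rw [hx n, inv_inv, sub_sub_cancel]

end IsCFOrbit

end Orbit

lemma IsCFOrbit.isQuadConj {K : Type*} [Field K] [CharZero K] {c : ℕ → ℚ} {x y : ℕ → K}
    (hx : IsCFOrbit c x) (hy : IsCFOrbit c y) (h0 : IsQuadConj (x 0) (y 0)) :
    ∀ n, IsQuadConj (x n) (y n)
  | 0 => h0
  | n + 1 => by
    rw [hx n, hy n]
    exact (hx.isQuadConj hy h0 n).inv_sub (c n)

lemma IsCFOrbit.norm_lt_one_of_norm_le_one {K : Type*} [NormedField K] [IsUltrametricDist K]
    {c : ℕ → ℚ} {y : ℕ → K} (hy : IsCFOrbit c y) (hc : ∀ n, 1 < ‖(c n : K)‖) {n : ℕ}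
    (hn : ‖y n‖ ≤ 1) : ∀ m, n < m → ‖y m‖ < 1 := by
  refine Nat.le_induction ?_ fun m _ hm => ?_
  · rw [hy n]
    exact norm_inv_sub_lt_one (hc n) hn
  · rw [hy m]
    exact norm_inv_sub_lt_one (hc m) hm.le

section Padic

variable {p : ℕ} [Fact p.Prime]

lemma Padic.norm_le_inv_of_norm_lt_one {x : ℚ_[p]} (h : ‖x‖ < 1) : ‖x‖ ≤ (p : ℝ)⁻¹ := by
  simpa using (Padic.norm_lt_pow_iff_norm_le_pow_sub_one x 0).mp (by simpa using h)

lemma Padic.mul_norm_sub_le_norm_inv_sub_inv {x y : ℚ_[p]} (hx : ‖x‖ ∈ Ioo 0 1)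
    (hy : ‖y‖ ∈ Ioo 0 1) : p * ‖x - y‖ ≤ ‖x⁻¹ - y⁻¹‖ := by
  have hpx : p * ‖x‖ ≤ 1 := by
    have hp : (0 : ℝ) < p := by exact_mod_cast (Fact.out : p.Prime).pos
    calc (p : ℝ) * ‖x‖ ≤ p * (p : ℝ)⁻¹ := by gcongr; exact Padic.norm_le_inv_of_norm_lt_one hx.2
      _ = 1 := mul_inv_cancel₀ hp.ne'
  rw [inv_sub_inv (norm_pos_iff.mp hx.1) (norm_pos_iff.mp hy.1), norm_div, norm_mul, norm_sub_rev,
    le_div_iff₀ (mul_pos hx.1 hy.1)]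
  have hxy := mul_le_one₀ hpx hy.1.le hy.2.le
  nlinarith [mul_le_mul_of_nonneg_left hxy (norm_nonneg (y - x))]

lemma IsCFOrbit.one_lt_norm_succ {c : ℕ → ℚ} {x : ℕ → ℚ_[p]} (hx : IsCFOrbit c x)
    (hxc : ∀ n, ‖x n - c n‖ ∈ Ioo 0 1) (n : ℕ) : 1 < ‖x (n + 1)‖ := by
  rw [hx n]
  exact one_lt_norm_inv_iff.mpr (hxc n)

lemma IsCFOrbit.eq_of_norm_sub_mem_Ioo {c : ℕ → ℚ} {x y : ℕ → ℚ_[p]} (hx : IsCFOrbit c x)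
    (hy : IsCFOrbit c y) (hxc : ∀ n, ‖x n - c n‖ ∈ Ioo 0 1)
    (hyc : ∀ n, ‖y n - c n‖ ∈ Ioo 0 1) : x 0 = y 0 := by
  have grow : ∀ n, ‖x 0 - y 0‖ * p ^ n ≤ ‖x n - y n‖ := by
    intro n
    induction n with
    | zero => simp
    | succ n ih =>
      calc ‖x 0 - y 0‖ * p ^ (n + 1) = p * (‖x 0 - y 0‖ * p ^ n) := by ring
        _ ≤ p * ‖(x n - c n) - (y n - c n)‖ := by rw [sub_sub_sub_cancel_right]; gcongr
        _ ≤ ‖x (n + 1) - y (n + 1)‖ := by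
          rw [hx n, hy n]
          exact Padic.mul_norm_sub_le_norm_inv_sub_inv (hxc n) (hyc n)
  have bounded (n : ℕ) : ‖x n - y n‖ < 1 := by
    rw [← sub_sub_sub_cancel_right _ _ (c n : ℚ_[p])]
    exact norm_sub_lt_of_norm_lt_of_norm_lt (hxc n).2 (hyc n).2
  by_contra hne
  have hpos : 0 < ‖x 0 - y 0‖ := norm_pos_iff.mpr (sub_ne_zero.mpr hne)
  obtain ⟨n, hn⟩ := pow_unbounded_of_one_lt ‖x 0 - y 0‖⁻¹
    (by exact_mod_cast (Fact.out : p.Prime).one_lt : (1 : ℝ) < p)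
  rw [inv_lt_iff_one_lt_mul₀' hpos] at hn
  linarith [grow n, bounded n]

lemma IsCFOrbit.eq_add_of_periodic_from {c : ℕ → ℚ} {x : ℕ → ℚ_[p]} (hx : IsCFOrbit c x)
    (hxc : ∀ n, ‖x n - c n‖ ∈ Ioo 0 1) {m k : ℕ} (hper : ∀ n, m ≤ n → c (n + k) = c n) :
    x m = x (m + k) := by
  have hdigits : (fun n => c (n + (m + k))) = fun n => c (n + m) :=
    funext fun n => by rw [← add_assoc]; exact hper _ (Nat.le_add_left m n)
  have hy : IsCFOrbit (fun n => c (n + m)) (fun n => x (n + (m + k))) :=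
    hdigits ▸ hx.comp_add (m + k)
  have hyc (n : ℕ) : ‖x (n + (m + k)) - c (n + m)‖ ∈ Ioo 0 1 := by
    rw [← congrFun hdigits n]
    exact hxc _
  simpa using (hx.comp_add m).eq_of_norm_sub_mem_Ioo hy (fun n => hxc (n + m)) hyc

end Padic

namespace IsPadicFrac

variable {p : ℕ} {a b : ℚ}

lemma sub (ha : IsPadicFrac p a) (hb : IsPadicFrac p b) : IsPadicFrac p (a - b) := by
  obtain ⟨m, z, hz⟩ := ha
  obtain ⟨m', z', hz'⟩ := hb
  refine ⟨m + m', z * p ^ m' - z' * p ^ m, ?_⟩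
  push_cast
  rw [← hz, ← hz']
  ring

lemma exists_eq_mul_of_norm_lt_one [Fact p.Prime] (ha : IsPadicFrac p a)
    (h : ‖(a : ℚ_[p])‖ < 1) : ∃ w : ℤ, a = p * w := by
  obtain ⟨m, z, hz⟩ := ha
  have hp : (p : ℝ) ≠ 0 := by exact_mod_cast (Fact.out : p.Prime).ne_zero
  have hnorm : ‖(z : ℚ_[p])‖ ≤ (p : ℝ) ^ (-(m + 1 : ℕ) : ℤ) := by
    have hz' : (z : ℚ_[p]) = a * (p : ℚ_[p]) ^ m := by exact_mod_cast hz.symm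
    rw [hz', norm_mul, Padic.norm_p_pow]
    calc ‖(a : ℚ_[p])‖ * (p : ℝ) ^ (-m : ℤ) ≤ (p : ℝ)⁻¹ * (p : ℝ) ^ (-m : ℤ) := by
          gcongr
          exact Padic.norm_le_inv_of_norm_lt_one h
      _ = (p : ℝ) ^ (-(m + 1 : ℕ) : ℤ) := by
          rw [← zpow_neg_one, ← zpow_add₀ hp]
          push_cast
          ring_nf
  obtain ⟨w, hw⟩ := (Padic.norm_int_le_pow_iff_dvd z (m + 1)).mp hnorm
  refine ⟨w, mul_right_cancel₀ (pow_ne_zero m (Nat.cast_ne_zero.mpr (Fact.out : p.Prime).ne_zero)) ?_⟩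
  rw [hz, hw]
  push_cast
  ring

lemma eq_of_norm_sub_lt_one [Fact p.Prime] (ha : IsPadicFrac p a) (hb : IsPadicFrac p b)
    (ha2 : |a| < p / 2) (hb2 : |b| < p / 2) (h : ‖(a : ℚ_[p]) - b‖ < 1) : a = b := by
  obtain ⟨w, hw⟩ := (ha.sub hb).exists_eq_mul_of_norm_lt_one (by push_cast; exact h)
  have hp : (0 : ℚ) < p := by exact_mod_cast (Fact.out : p.Prime).pos
  have hpw : p * |(w : ℚ)| < p * 1 := by
    rw [← abs_of_pos hp, ← abs_mul, ← hw, abs_of_pos hp, mul_one]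
    linarith [abs_sub a b]
  have hw0 : w = 0 := Int.abs_lt_one_iff.mp (by exact_mod_cast lt_of_mul_lt_mul_left hpw hp.le)
  rw [hw0] at hw
  simpa [sub_eq_zero] using hw

end IsPadicFrac

section Browkin

variable {p : ℕ} [Fact p.Prime] {c : ℕ → ℚ} {x y : ℕ → ℚ_[p]}

theorem IsCFOrbit.one_lt_norm_and_norm_conj_lt_one_of_periodic (hx : IsCFOrbit c x)
    (hy : IsCFOrbit c y) (hconj : ∀ n, IsQuadConj (x n) (y n))
    (hxc : ∀ n, ‖x n - c n‖ ∈ Ioo 0 1) {k : ℕ} (hk : 1 ≤ k) (hper : Function.Periodic c k) :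
    1 < ‖x 0‖ ∧ ‖y 0‖ < 1 := by
  have hxk : Function.Periodic x k := fun n =>
    (hx.eq_add_of_periodic_from hxc fun m _ => hper m).symm
  have hyk : Function.Periodic y k := fun n =>
    ((hconj n).right_unique (by rw [← hxk n]; exact hconj (n + k))).symm
  have hx1 (n : ℕ) : 1 < ‖x n‖ := by
    obtain ⟨j, hj⟩ : ∃ j, n + k = j + 1 := ⟨n + k - 1, by omega⟩
    rw [← hxk n, hj]
    exact hx.one_lt_norm_succ hxc j
  have hc1 (n : ℕ) : 1 < ‖(c n : ℚ_[p])‖ := one_lt_norm_of_norm_sub_lt_one (hxc n).2 (hx1 n)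
  refine ⟨hx1 0, not_le.mp fun hy0 => ?_⟩
  have hy1 (n : ℕ) : 1 < ‖y n‖ := by
    by_contra! hn
    have hlt : n < (n + 1) * k := Nat.lt_of_lt_of_le n.lt_succ_self (Nat.le_mul_of_pos_right _ hk)
    have hyn : y ((n + 1) * k) = y 0 := hyk.nat_mul_eq (n + 1)
    have := hy.norm_lt_one_of_norm_le_one hc1 hn _ hlt
    rw [hyn] at this
    linarith
  have hyc (n : ℕ) : ‖y n - c n‖ ∈ Ioo 0 1 := by
    rw [← one_lt_norm_inv_iff, ← hy n]
    exact hy1 (n + 1)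
  exact (hconj 0).left_ne_right (hx.eq_of_norm_sub_mem_Ioo hy hxc hyc)

theorem IsCFOrbit.periodic_of_periodic_from (hx : IsCFOrbit c x) (hy : IsCFOrbit c y)
    (hconj : ∀ n, IsQuadConj (x n) (y n)) (hxc : ∀ n, ‖x n - c n‖ ∈ Ioo 0 1)
    (hc : ∀ n, IsPadicFrac p (c n) ∧ |c n| < p / 2) (hx0 : 1 < ‖x 0‖) (hy0 : ‖y 0‖ < 1)
    {m k : ℕ} (hper : ∀ n, m ≤ n → c (n + k) = c n) : Function.Periodic c k := by
  have hx1 : ∀ n, 1 < ‖x n‖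
    | 0 => hx0
    | n + 1 => hx.one_lt_norm_succ hxc n
  have hc1 (n : ℕ) : 1 < ‖(c n : ℚ_[p])‖ := one_lt_norm_of_norm_sub_lt_one (hxc n).2 (hx1 n)
  have hy1 : ∀ n, ‖y n‖ < 1
    | 0 => hy0
    | n + 1 => hy.norm_lt_one_of_norm_le_one hc1 hy0.le _ n.succ_pos
  have descend (j : ℕ) (hj : ∀ n, j + 1 ≤ n → c (n + k) = c n) :
      ∀ n, j ≤ n → c (n + k) = c n := by
    intro n hn
    rcases hn.eq_or_lt with rfl | hlt
    · have hxj := hx.eq_add_of_periodic_from hxc hj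
      have hyj : y (j + 1) = y (j + 1 + k) := (hconj _).right_unique (by rw [hxj]; exact hconj _)
      refine (hc _).1.eq_of_norm_sub_lt_one (hc _).1 (hc _).2 (hc _).2 ?_
      rw [hy.digit_eq, hy.digit_eq, Nat.add_right_comm, ← hyj, sub_sub_sub_cancel_right]
      exact norm_sub_lt_of_norm_lt_of_norm_lt (hy1 _) (hy1 _)
    · exact hj n hlt
  suffices ∀ j, (∀ n, j ≤ n → c (n + k) = c n) → Function.Periodic c k from this m hper
  intro j
  induction j with
  | zero => exact fun h n => h n n.zero_le
  | succ j ih => exact fun h => ih (descend j h)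

end Browkin

theorem stmt_13_general (p : ℕ) [Fact p.Prime]
    (α₀ : ℚ_[p]) (hirr : ∀ q : ℚ, α₀ ≠ (q : ℚ_[p]))
    (r s : ℚ) (hquad : α₀ ^ 2 = (r : ℚ_[p]) * α₀ + (s : ℚ_[p]))
    (α : ℕ → ℚ_[p]) (b : ℕ → ℚ) (h0 : α 0 = α₀) (halg : Alg1 p α b)
    (hper : ∃ h k : ℕ, 1 ≤ k ∧ ∀ n, h ≤ n → b (n + k) = b n) :
    (∃ k : ℕ, 1 ≤ k ∧ ∀ n, b (n + k) = b n) ↔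
      (1 < ‖α₀‖ ∧ ‖(r : ℚ_[p]) - α₀‖ < 1) := by
  subst h0
  have hα : IsCFOrbit b α := halg.2
  have hβ := isCFOrbit_cfOrbit b ((r : ℚ_[p]) - α 0)
  have hconj := hα.isQuadConj hβ (isQuadConj_sub_of_sq_eq hirr hquad)
  have hαb (n : ℕ) : ‖α n - b n‖ ∈ Ioo 0 1 :=
    ⟨norm_pos_iff.mpr (sub_ne_zero.mpr ((hconj n).1 _)), (halg.1 n).2.2⟩
  constructor
  · rintro ⟨k, hk, hb⟩
    exact hα.one_lt_norm_and_norm_conj_lt_one_of_periodic hβ hconj hαb hk hb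
  · rintro ⟨hα0, hβ0⟩
    obtain ⟨m, k, hk, hb⟩ := hper
    exact ⟨k, hk, hα.periodic_of_periodic_from hβ hconj hαb
      (fun n => ⟨(halg.1 n).1, (halg.1 n).2.1⟩) hα0 hβ0 hb⟩

/-- For `α₀` a quadratic irrational (with `α₀² = r·α₀ + s`, conjugate `r - α₀`)
whose Browkin I expansion is periodic, the expansion is purely periodic iff
`‖α₀‖_p > 1` and `‖ᾱ₀‖_p < 1`. -/
theorem stmt_13 (p : ℕ) [Fact p.Prime] (hp : p ≠ 2)
    (α₀ : ℚ_[p]) (hirr : ∀ q : ℚ, α₀ ≠ (q : ℚ_[p]))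
    (r s : ℚ) (hquad : α₀ ^ 2 = (r : ℚ_[p]) * α₀ + (s : ℚ_[p]))
    (α : ℕ → ℚ_[p]) (b : ℕ → ℚ) (h0 : α 0 = α₀) (halg : Alg1 p α b)
    (hper : ∃ h k : ℕ, 1 ≤ k ∧ ∀ n, h ≤ n → b (n + k) = b n) :
    (∃ k : ℕ, 1 ≤ k ∧ ∀ n, b (n + k) = b n) ↔
      (1 < ‖α₀‖ ∧ ‖(r : ℚ_[p]) - α₀‖ < 1) :=
  stmt_13_general p α₀ hirr r s hquad α b h0 halg hper
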